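/- Let ρ : (0,1] → ℝ be a nonnegative measurable function such that r ↦ r³ρ(r) is integrable on (0,1) and satisfies the second-moment normalization ∫₀¹ r³ρ(r) dr = 2/π. Then for every δ > 0 and every k ∈ ℤ² \ {0} with 0 < δ|k| ≤ π, the symbol λ_δ(k) is strictly positive and |1/λ_δ(k) − 1/|k|²| ≤ δ²/(16 − π²). -/

import Mathlib

open Real MeasureTheory

/-- Euclidean norm of a nonzero integer vector `k ∈ ℤ²`. -/
noncomputable def knorm2 (k : ℤ × ℤ) : ℝ :=
  Real.sqrt ((k.1 : ℝ) ^ 2 + (k.2 : ℝ) ^ 2)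

/-- The 2D Fourier symbol of the nonlocal diffusion operator:
`λ_δ(k) = (4/δ²) ∫₀^{π/2} ∫₀¹ r ρ(r) (1 − cos(r δ |k| cos θ)) dr dθ`. -/
noncomputable def lambdaDelta2 (ρ : ℝ → ℝ) (δ κ : ℝ) : ℝ :=
  (4 / δ ^ 2) * ∫ θ in (0:ℝ)..(π / 2), ∫ r in (0:ℝ)..1,
    r * ρ r * (1 - Real.cos (r * δ * κ * Real.cos θ))

/-! Put `a = δ|k|`. Pointwise on `(0, 1]`, the Taylor bounds `x²/2 - x⁴/24 ≤ 1 - cos x ≤ x²/2`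
applied to `x = r c`, together with `r⁴ ≤ r²`, squeeze the radial integral `∫₀¹ r ρ(r) (1 - cos (r c)) dr`
between `(c²/2 - c⁴/24) M` and `c²/2 M`, where `M = ∫₀¹ r³ ρ` is the second moment. Integrating
`c = a cos θ` against `∫₀^{π/2} cos² = π/4` and `∫₀^{π/2} cos⁴ = 3π/16`, the normalization `M = 2/π`
gives `|k|² - δ²|k|⁴/16 ≤ λ_δ(k) ≤ |k|²`. As `δ²|k|² ≤ π² < 16`, the lower bound is positive and
`0 ≤ 1/λ_δ(k) - 1/|k|² = (|k|² - λ_δ(k)) / (λ_δ(k) |k|²) ≤ δ² / (16 - π²)`. -/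

open Set

lemma Real.cos_le_one_sub_sq_div_two_add (x : ℝ) : cos x ≤ 1 - x ^ 2 / 2 + x ^ 4 / 24 := by
  wlog hx : 0 ≤ x
  · simpa [Even.neg_pow (by decide : Even 4)] using this (-x) (by linarith)
  let f (t : ℝ) : ℝ := 1 - t ^ 2 / 2 + t ^ 4 / 24 - cos t
  have hderiv (t : ℝ) : deriv f t = sin t - (t - t ^ 3 / 6) := by
    simp (disch := fun_prop) [f]
    ring
  have hmono : MonotoneOn f (Ici 0) := by
    apply monotoneOn_of_deriv_nonneg (convex_Ici 0) (by fun_prop) (by fun_prop)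
    grind [sin_ge_sub_cube, interior_Ici]
  have h0 : f 0 ≤ f x := hmono (by simp) hx hx
  grind [cos_zero]

lemma sq_mul_le_one_sub_cos_mul {r : ℝ} (hr : r ^ 2 ≤ 1) (c : ℝ) :
    r ^ 2 * (c ^ 2 / 2 - c ^ 4 / 24) ≤ 1 - cos (r * c) := by
  have hr4 : r ^ 2 * r ^ 2 ≤ r ^ 2 := mul_le_of_le_one_right (sq_nonneg r) hr
  have := cos_le_one_sub_sq_div_two_add (r * c)
  nlinarith [mul_le_mul_of_nonneg_right hr4 (pow_nonneg (sq_nonneg c) 2)]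

noncomputable def radialIntegral (ρ : ℝ → ℝ) (c : ℝ) : ℝ :=
  ∫ r in (0:ℝ)..1, r * ρ r * (1 - cos (r * c))

section Pointwise

variable {ρ : ℝ → ℝ} {r : ℝ} (hρ : 0 ≤ ρ r) (hr : 0 ≤ r) (c : ℝ)
include hρ hr

lemma mul_one_sub_cos_nonneg : 0 ≤ r * ρ r * (1 - cos (r * c)) :=
  mul_nonneg (mul_nonneg hr hρ) (sub_nonneg.2 (cos_le_one _))

lemma mul_one_sub_cos_le : r * ρ r * (1 - cos (r * c)) ≤ c ^ 2 / 2 * (r ^ 3 * ρ r) := by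
  have := one_sub_sq_div_two_le_cos (x := r * c)
  have hcos : 1 - cos (r * c) ≤ r ^ 2 * (c ^ 2 / 2) := by nlinarith
  calc r * ρ r * (1 - cos (r * c)) ≤ r * ρ r * (r ^ 2 * (c ^ 2 / 2)) :=
        mul_le_mul_of_nonneg_left hcos (mul_nonneg hr hρ)
    _ = c ^ 2 / 2 * (r ^ 3 * ρ r) := by ring

lemma le_mul_one_sub_cos (hr₁ : r ≤ 1) :
    (c ^ 2 / 2 - c ^ 4 / 24) * (r ^ 3 * ρ r) ≤ r * ρ r * (1 - cos (r * c)) :=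
  calc (c ^ 2 / 2 - c ^ 4 / 24) * (r ^ 3 * ρ r)
      = r * ρ r * (r ^ 2 * (c ^ 2 / 2 - c ^ 4 / 24)) := by ring
    _ ≤ r * ρ r * (1 - cos (r * c)) :=
        mul_le_mul_of_nonneg_left (sq_mul_le_one_sub_cos_mul (pow_le_one₀ hr hr₁) c)
          (mul_nonneg hr hρ)

end Pointwise

section Radial

variable {ρ : ℝ → ℝ} (hmeas : Measurable ρ) (hnonneg : ∀ r ∈ Ioc (0:ℝ) 1, 0 ≤ ρ r)
  (hint : IntervalIntegrable (fun r => r ^ 3 * ρ r) volume 0 1)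
include hmeas hnonneg hint

lemma intervalIntegrable_mul_one_sub_cos (c : ℝ) :
    IntervalIntegrable (fun r => r * ρ r * (1 - cos (r * c))) volume 0 1 := by
  rw [intervalIntegrable_iff_integrableOn_Ioc_of_le zero_le_one] at hint ⊢
  refine (hint.const_mul (c ^ 2 / 2)).mono' (by fun_prop) ?_
  filter_upwards [ae_restrict_mem measurableSet_Ioc] with r hr
  rw [norm_of_nonneg (mul_one_sub_cos_nonneg (hnonneg r hr) hr.1.le c)]
  exact mul_one_sub_cos_le (hnonneg r hr) hr.1.le c

lemma radialIntegral_le (c : ℝ) :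
    radialIntegral ρ c ≤ c ^ 2 / 2 * ∫ r in (0:ℝ)..1, r ^ 3 * ρ r := by
  rw [radialIntegral, ← intervalIntegral.integral_const_mul]
  refine intervalIntegral.integral_mono_on_of_le_Ioo zero_le_one
    (intervalIntegrable_mul_one_sub_cos hmeas hnonneg hint c) (hint.const_mul _) fun r hr => ?_
  exact mul_one_sub_cos_le (hnonneg r (Ioo_subset_Ioc_self hr)) hr.1.le c

lemma le_radialIntegral (c : ℝ) :
    (c ^ 2 / 2 - c ^ 4 / 24) * (∫ r in (0:ℝ)..1, r ^ 3 * ρ r) ≤ radialIntegral ρ c := by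
  rw [radialIntegral, ← intervalIntegral.integral_const_mul]
  refine intervalIntegral.integral_mono_on_of_le_Ioo zero_le_one (hint.const_mul _)
    (intervalIntegrable_mul_one_sub_cos hmeas hnonneg hint c) fun r hr => ?_
  exact le_mul_one_sub_cos (hnonneg r (Ioo_subset_Ioc_self hr)) hr.1.le c hr.2.le

lemma continuous_radialIntegral : Continuous (radialIntegral ρ) := by
  refine continuous_iff_continuousAt.2 fun c₀ => ?_
  refine intervalIntegral.continuousAt_of_dominated_interval
    (bound := fun r => (|c₀| + 1) ^ 2 / 2 * (r ^ 3 * ρ r))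
    (Filter.Eventually.of_forall fun c => by fun_prop) ?_ (hint.const_mul _)
    (ae_of_all _ fun r _ => by fun_prop)
  filter_upwards [Metric.ball_mem_nhds c₀ one_pos] with c hc
  refine ae_of_all _ fun r hr => ?_
  rw [uIoc_of_le zero_le_one] at hr
  have hρ := hnonneg r hr
  rw [norm_of_nonneg (mul_one_sub_cos_nonneg hρ hr.1.le c)]
  have hc : c ^ 2 ≤ (|c₀| + 1) ^ 2 := by
    rw [← sq_abs c]
    have := abs_sub_abs_le_abs_sub c c₀
    rw [Metric.mem_ball, Real.dist_eq] at hc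
    gcongr
    linarith
  calc r * ρ r * (1 - cos (r * c)) ≤ c ^ 2 / 2 * (r ^ 3 * ρ r) := mul_one_sub_cos_le hρ hr.1.le c
    _ ≤ (|c₀| + 1) ^ 2 / 2 * (r ^ 3 * ρ r) := by
        gcongr
        exact mul_nonneg (pow_nonneg hr.1.le 3) hρ

lemma intervalIntegrable_radialIntegral_mul_cos (a : ℝ) :
    IntervalIntegrable (fun θ => radialIntegral ρ (a * cos θ)) volume 0 (π / 2) :=
  ((continuous_radialIntegral hmeas hnonneg hint).comp (by fun_prop)).intervalIntegrable _ _

end Radial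

lemma integral_cos_sq_zero_pi_div_two : ∫ θ in (0:ℝ)..(π / 2), cos θ ^ 2 = π / 4 := by
  simp [integral_cos_sq]
  ring

lemma integral_cos_pow_four_zero_pi_div_two :
    ∫ θ in (0:ℝ)..(π / 2), cos θ ^ 4 = 3 * π / 16 := by
  rw [integral_cos_pow (n := 2)]
  norm_num [integral_cos_sq_zero_pi_div_two]
  ring

lemma lambdaDelta2_eq_integral_radialIntegral (ρ : ℝ → ℝ) (δ κ : ℝ) :
    lambdaDelta2 ρ δ κ = 4 / δ ^ 2 * ∫ θ in (0:ℝ)..(π / 2), radialIntegral ρ (δ * κ * cos θ) := by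
  simp only [lambdaDelta2, radialIntegral, mul_assoc]

section Angular

variable {ρ : ℝ → ℝ} (hmeas : Measurable ρ) (hnonneg : ∀ r ∈ Ioc (0:ℝ) 1, 0 ≤ ρ r)
  (hint : IntervalIntegrable (fun r => r ^ 3 * ρ r) volume 0 1)
include hmeas hnonneg hint

lemma integral_radialIntegral_mul_cos_le (a : ℝ) :
    ∫ θ in (0:ℝ)..(π / 2), radialIntegral ρ (a * cos θ)
      ≤ π / 8 * (∫ r in (0:ℝ)..1, r ^ 3 * ρ r) * a ^ 2 := by
  set M := ∫ r in (0:ℝ)..1, r ^ 3 * ρ r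
  calc ∫ θ in (0:ℝ)..(π / 2), radialIntegral ρ (a * cos θ)
      ≤ ∫ θ in (0:ℝ)..(π / 2), a ^ 2 * M / 2 * cos θ ^ 2 := by
        refine intervalIntegral.integral_mono_on (by positivity)
          (intervalIntegrable_radialIntegral_mul_cos hmeas hnonneg hint a)
          (((continuous_cos.pow 2).intervalIntegrable _ _).const_mul _) fun θ _ => ?_
        convert radialIntegral_le hmeas hnonneg hint (a * cos θ) using 1
        ring
    _ = π / 8 * M * a ^ 2 := by
        rw [intervalIntegral.integral_const_mul, integral_cos_sq_zero_pi_div_two]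
        ring

lemma le_integral_radialIntegral_mul_cos (a : ℝ) :
    π / 8 * (∫ r in (0:ℝ)..1, r ^ 3 * ρ r) * (a ^ 2 - a ^ 4 / 16)
      ≤ ∫ θ in (0:ℝ)..(π / 2), radialIntegral ρ (a * cos θ) := by
  set M := ∫ r in (0:ℝ)..1, r ^ 3 * ρ r
  have hcos2 : IntervalIntegrable (fun θ => cos θ ^ 2) volume 0 (π / 2) :=
    (continuous_cos.pow 2).intervalIntegrable _ _
  have hcos4 : IntervalIntegrable (fun θ => cos θ ^ 4) volume 0 (π / 2) :=
    (continuous_cos.pow 4).intervalIntegrable _ _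
  calc π / 8 * M * (a ^ 2 - a ^ 4 / 16)
      = ∫ θ in (0:ℝ)..(π / 2), a ^ 2 * M / 2 * cos θ ^ 2 - a ^ 4 * M / 24 * cos θ ^ 4 := by
        rw [intervalIntegral.integral_sub (hcos2.const_mul _) (hcos4.const_mul _),
          intervalIntegral.integral_const_mul, intervalIntegral.integral_const_mul,
          integral_cos_sq_zero_pi_div_two, integral_cos_pow_four_zero_pi_div_two]
        ring
    _ ≤ ∫ θ in (0:ℝ)..(π / 2), radialIntegral ρ (a * cos θ) := by
        refine intervalIntegral.integral_mono_on (by positivity)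
          ((hcos2.const_mul _).sub (hcos4.const_mul _))
          (intervalIntegrable_radialIntegral_mul_cos hmeas hnonneg hint a) fun θ _ => ?_
        convert le_radialIntegral hmeas hnonneg hint (a * cos θ) using 1
        ring

lemma lambdaDelta2_le {δ : ℝ} (hδ : δ ≠ 0) (κ : ℝ) :
    lambdaDelta2 ρ δ κ ≤ π / 2 * (∫ r in (0:ℝ)..1, r ^ 3 * ρ r) * κ ^ 2 := by
  rw [lambdaDelta2_eq_integral_radialIntegral]
  calc 4 / δ ^ 2 * ∫ θ in (0:ℝ)..(π / 2), radialIntegral ρ (δ * κ * cos θ)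
      ≤ 4 / δ ^ 2 * (π / 8 * (∫ r in (0:ℝ)..1, r ^ 3 * ρ r) * (δ * κ) ^ 2) := by
        gcongr
        exact integral_radialIntegral_mul_cos_le hmeas hnonneg hint _
    _ = π / 2 * (∫ r in (0:ℝ)..1, r ^ 3 * ρ r) * κ ^ 2 := by
        field_simp
        ring

lemma le_lambdaDelta2 {δ : ℝ} (hδ : δ ≠ 0) (κ : ℝ) :
    π / 2 * (∫ r in (0:ℝ)..1, r ^ 3 * ρ r) * (κ ^ 2 - δ ^ 2 * κ ^ 4 / 16)
      ≤ lambdaDelta2 ρ δ κ := by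
  rw [lambdaDelta2_eq_integral_radialIntegral]
  calc π / 2 * (∫ r in (0:ℝ)..1, r ^ 3 * ρ r) * (κ ^ 2 - δ ^ 2 * κ ^ 4 / 16)
      = 4 / δ ^ 2 * (π / 8 * (∫ r in (0:ℝ)..1, r ^ 3 * ρ r) *
          ((δ * κ) ^ 2 - (δ * κ) ^ 4 / 16)) := by
        field_simp
        ring
    _ ≤ 4 / δ ^ 2 * ∫ θ in (0:ℝ)..(π / 2), radialIntegral ρ (δ * κ * cos θ) := by
        gcongr
        exact le_integral_radialIntegral_mul_cos hmeas hnonneg hint _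

end Angular

lemma pos_and_abs_one_div_sub_one_div_le {K L d p : ℝ} (hK : 0 < K) (hp : p < 16)
    (hdK : d * K ≤ p) (hlow : K - d * K ^ 2 / 16 ≤ L) (hup : L ≤ K) :
    0 < L ∧ |1 / L - 1 / K| ≤ d / (16 - p) := by
  have hL : K * (16 - p) / 16 ≤ L := by nlinarith
  have hLpos : 0 < L := lt_of_lt_of_le (by have := sub_pos.2 hp; positivity) hL
  refine ⟨hLpos, ?_⟩
  rw [abs_of_nonneg (sub_nonneg.2 (one_div_le_one_div_of_le hLpos hup)),
    div_sub_div _ _ hLpos.ne' hK.ne', div_le_div_iff₀ (by positivity) (sub_pos.2 hp)]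
  nlinarith [mul_le_mul_of_nonneg_left hL (by nlinarith : 0 ≤ d * K)]

theorem lambdaDelta2_small_deltaK_estimate_general (ρ : ℝ → ℝ) (hmeas : Measurable ρ)
    (hnonneg : ∀ r ∈ Set.Ioc (0:ℝ) 1, 0 ≤ ρ r)
    (hint : IntervalIntegrable (fun r => r ^ 3 * ρ r) volume 0 1)
    (hmoment : (∫ r in (0:ℝ)..1, r ^ 3 * ρ r) = 2 / π)
    (δ : ℝ) (k : ℤ × ℤ)
    (hsmall : 0 < δ * knorm2 k ∧ δ * knorm2 k ≤ π) :
    0 < lambdaDelta2 ρ δ (knorm2 k) ∧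
      |1 / lambdaDelta2 ρ δ (knorm2 k) - 1 / (knorm2 k) ^ 2| ≤ δ ^ 2 / (16 - π ^ 2) := by
  obtain ⟨hpos, hle⟩ := hsmall
  have hδ : δ ≠ 0 := by rintro rfl; simp at hpos
  have hκ : 0 < knorm2 k :=
    (show 0 ≤ knorm2 k from sqrt_nonneg _).lt_of_ne fun h => by simp [← h] at hpos
  have hM : π / 2 * (∫ r in (0:ℝ)..1, r ^ 3 * ρ r) = 1 := by
    rw [hmoment]
    field_simp
  have hup := lambdaDelta2_le hmeas hnonneg hint hδ (knorm2 k)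
  have hlow := le_lambdaDelta2 hmeas hnonneg hint hδ (knorm2 k)
  rw [hM, one_mul] at hup hlow
  refine pos_and_abs_one_div_sub_one_div_le (by positivity) (by nlinarith [pi_lt_four, pi_pos])
    ?_ (by linarith) hup
  calc δ ^ 2 * knorm2 k ^ 2 = (δ * knorm2 k) ^ 2 := by ring
    _ ≤ π ^ 2 := by gcongr

theorem lambdaDelta2_small_deltaK_estimate (ρ : ℝ → ℝ) (hmeas : Measurable ρ)
    (hnonneg : ∀ r ∈ Set.Ioc (0:ℝ) 1, 0 ≤ ρ r)
    (hint : IntervalIntegrable (fun r => r ^ 3 * ρ r) volume 0 1)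
    (hmoment : (∫ r in (0:ℝ)..1, r ^ 3 * ρ r) = 2 / π)
    (δ : ℝ) (hδ : 0 < δ) (k : ℤ × ℤ) (hk : k ≠ 0)
    (hsmall : 0 < δ * knorm2 k ∧ δ * knorm2 k ≤ π) :
    0 < lambdaDelta2 ρ δ (knorm2 k) ∧
      |1 / lambdaDelta2 ρ δ (knorm2 k) - 1 / (knorm2 k) ^ 2| ≤ δ ^ 2 / (16 - π ^ 2) :=
  lambdaDelta2_small_deltaK_estimate_general ρ hmeas hnonneg hint hmoment δ k hsmall
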